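/- Consider the vector fields on ℝ³ (coordinates (x,y,z), z ≠ 0): X₀ = (−γx − (hx² − y²)/z)∂ₓ + (−γy − (1+h)xy/z)∂_y + (1−h)x∂_z, X₁ = √(2κ₁)∂ₓ, X₂ = √(2κ₂)∂_y, with γ, κ₁, κ₂ > 0 and h ∈ (0,1). Then at every point with z ≠ 0, the vectors X₁, X₂, and the Lie bracket [X₁, X₀] span ℝ³ (Hörmander's bracket condition holds). -/
import Mathlib


open Real

/-- Lie bracket of vector fields on `ℝ³`: `[X,Y](p) = DY(p)X(p) − DX(p)Y(p)`. -/
noncomputable def lieBr (X Y : (Fin 3 → ℝ) → (Fin 3 → ℝ)) (p : Fin 3 → ℝ) : Fin 3 → ℝ :=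
  fderiv ℝ Y p (X p) - fderiv ℝ X p (Y p)

/-- The drift vector field `X₀`. -/
noncomputable def X0 (γ h : ℝ) : (Fin 3 → ℝ) → (Fin 3 → ℝ) := fun p =>
  ![-γ * p 0 - (h * (p 0) ^ 2 - (p 1) ^ 2) / p 2,
    -γ * p 1 - (1 + h) * p 0 * p 1 / p 2,
    (1 - h) * p 0]

/-- The noise vector field `X₁`. -/
noncomputable def X1 (κ₁ : ℝ) : (Fin 3 → ℝ) → (Fin 3 → ℝ) := fun _ =>
  ![Real.sqrt (2*κ₁), 0, 0]

/-- The noise vector field `X₂`. -/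
noncomputable def X2 (κ₂ : ℝ) : (Fin 3 → ℝ) → (Fin 3 → ℝ) := fun _ =>
  ![0, Real.sqrt (2*κ₂), 0]

/-- Hörmander's bracket condition: at every point with `z ≠ 0`, the vectors
`X₁`, `X₂`, `[X₁, X₀]` span `ℝ³`. -/
theorem hormander_condition (γ h κ₁ κ₂ : ℝ)
    (hγ : 0 < γ) (hκ₁ : 0 < κ₁) (hκ₂ : 0 < κ₂) (hh : h ∈ Set.Ioo (0:ℝ) 1) :
    ∀ p : Fin 3 → ℝ, p 2 ≠ 0 →
      Submodule.span ℝ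
        ({X1 κ₁ p, X2 κ₂ p, lieBr (X1 κ₁) (X0 γ h) p} : Set (Fin 3 → ℝ)) = ⊤ := by
  obtain ⟨hh0, hh1⟩ := hh
  intro p hp
  have hs1 : Real.sqrt (2*κ₁) ≠ 0 := by positivity
  have hs2 : Real.sqrt (2*κ₂) ≠ 0 := by positivity
  -- differentiability of X0 at p
  have hdiff : DifferentiableAt ℝ (X0 γ h) p := by
    rw [differentiableAt_pi]
    intro i
    fin_cases i <;> simp only [X0, div_eq_mul_inv, Matrix.cons_val_zero, Matrix.cons_val_one,
      Matrix.head_cons, Matrix.cons_val_two, Matrix.tail_cons, Fin.mk_zero, Fin.mk_one] <;>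
      simp [div_eq_mul_inv] <;> fun_prop (disch := assumption)
  -- third component of the bracket
  set g : (Fin 3 → ℝ) →L[ℝ] ℝ := ContinuousLinearMap.proj 2 with hg
  have hcomp : HasFDerivAt (g ∘ X0 γ h) (g.comp (fderiv ℝ (X0 γ h) p)) p :=
    g.hasFDerivAt.comp p hdiff.hasFDerivAt
  have hgx0 : (g ∘ X0 γ h) = fun q => (1 - h) * q 0 := by
    funext q; simp [X0, hg]
  have H : HasFDerivAt (fun q : Fin 3 → ℝ => (1 - h) * q 0)
      ((1 - h) • (ContinuousLinearMap.proj 0 : (Fin 3 → ℝ) →L[ℝ] ℝ)) p :=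
    (ContinuousLinearMap.proj 0 : (Fin 3 → ℝ) →L[ℝ] ℝ).hasFDerivAt.const_mul (1 - h)
  rw [hgx0] at hcomp
  have heq := hcomp.unique H
  have hX1der : fderiv ℝ (X1 κ₁) p = 0 := fderiv_const_apply _
  have hv2 : lieBr (X1 κ₁) (X0 γ h) p 2 = (1 - h) * Real.sqrt (2*κ₁) := by
    have h3 : fderiv ℝ (X0 γ h) p (X1 κ₁ p) 2 = (1 - h) * Real.sqrt (2*κ₁) := by
      have : fderiv ℝ (X0 γ h) p (X1 κ₁ p) 2 = g.comp (fderiv ℝ (X0 γ h) p) (X1 κ₁ p) := rfl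
      rw [this, heq]
      simp [X1]
    simp [lieBr, hX1der, h3]
  set v := lieBr (X1 κ₁) (X0 γ h) p with hv
  have hv2ne : v 2 ≠ 0 := by
    rw [hv2]; exact mul_ne_zero (by linarith) hs1
  set S : Set (Fin 3 → ℝ) := {X1 κ₁ p, X2 κ₂ p, v} with hS
  have m1 : X1 κ₁ p ∈ Submodule.span ℝ S := Submodule.subset_span (by simp [hS])
  have m2 : X2 κ₂ p ∈ Submodule.span ℝ S := Submodule.subset_span (by simp [hS])
  have m3 : v ∈ Submodule.span ℝ S := Submodule.subset_span (by simp [hS])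
  have he0 : (Pi.single 0 1 : Fin 3 → ℝ) ∈ Submodule.span ℝ S := by
    have : (Pi.single 0 1 : Fin 3 → ℝ) = (Real.sqrt (2*κ₁))⁻¹ • X1 κ₁ p := by
      funext i; fin_cases i <;> simp [X1] <;> field_simp <;> ring
    rw [this]; exact Submodule.smul_mem _ _ m1
  have he1 : (Pi.single 1 1 : Fin 3 → ℝ) ∈ Submodule.span ℝ S := by
    have : (Pi.single 1 1 : Fin 3 → ℝ) = (Real.sqrt (2*κ₂))⁻¹ • X2 κ₂ p := by
      funext i; fin_cases i <;> simp [X2] <;> field_simp <;> ring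
    rw [this]; exact Submodule.smul_mem _ _ m2
  have he2 : (Pi.single 2 1 : Fin 3 → ℝ) ∈ Submodule.span ℝ S := by
    have : (Pi.single 2 1 : Fin 3 → ℝ)
        = (v 2)⁻¹ • (v - v 0 • (Pi.single 0 1 : Fin 3 → ℝ) - v 1 • (Pi.single 1 1 : Fin 3 → ℝ)) := by
      funext i; fin_cases i <;> simp [hv2ne] <;> field_simp
    rw [this]
    exact Submodule.smul_mem _ _ (Submodule.sub_mem _
      (Submodule.sub_mem _ m3 (Submodule.smul_mem _ _ he0)) (Submodule.smul_mem _ _ he1))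
  rw [eq_top_iff]
  intro x _
  have hx : x = x 0 • (Pi.single 0 1 : Fin 3 → ℝ) + x 1 • (Pi.single 1 1 : Fin 3 → ℝ)
      + x 2 • (Pi.single 2 1 : Fin 3 → ℝ) := by
    funext i; fin_cases i <;> simp
  rw [hx]
  exact Submodule.add_mem _ (Submodule.add_mem _ (Submodule.smul_mem _ _ he0)
    (Submodule.smul_mem _ _ he1)) (Submodule.smul_mem _ _ he2)
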